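/- For ADAPD iterates, if η < 1/(2L), then for all k ≥ 0: L_η(X^{k+1}, X0^k; Y^k, Z^k) − L_η(X^k, X0^k; Y^k, Z^k) ≤ ((2Lη − 1)/(2η)) ‖X^{k+1} − X^k‖_F² + ε_{k+1}/(2L). -/

import Mathlib

open Matrix Finset

attribute [local instance] Matrix.frobeniusNormedAddCommGroup Matrix.frobeniusNormedSpace

noncomputable section

variable {N p : ℕ}

/-- Frobenius inner product on `N × p` real matrices. -/
def frobInner (A B : Matrix (Fin N) (Fin p) ℝ) : ℝ := ∑ i, ∑ j, A i j * B i j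

/-- Squared Frobenius norm. -/
def frobSq (A : Matrix (Fin N) (Fin p) ℝ) : ℝ := frobInner A A

/-- Frobenius norm. -/
def frobNorm (A : Matrix (Fin N) (Fin p) ℝ) : ℝ := Real.sqrt (frobInner A A)

/-- The continuous linear functional `H ↦ ⟨G, H⟩_F`. -/
def frobCLM (G : Matrix (Fin N) (Fin p) ℝ) : Matrix (Fin N) (Fin p) ℝ →L[ℝ] ℝ :=
  LinearMap.toContinuousLinearMap
    { toFun := fun H => frobInner G H
      map_add' := by
        intro x y
        simp [frobInner, Matrix.add_apply, mul_add, Finset.sum_add_distrib]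
      map_smul' := by
        intro c x
        simp [frobInner, Matrix.smul_apply, Finset.mul_sum]
        ring_nf
        apply Finset.sum_congr rfl; intro i _
        apply Finset.sum_congr rfl; intro j _; ring }

/-- Spectral norm (operator 2-norm) of a square real matrix. -/
def specNorm {N : ℕ} (M : Matrix (Fin N) (Fin N) ℝ) : ℝ :=
  ‖Matrix.toEuclideanCLM (𝕜 := ℝ) M‖

/-- The all-ones `N × N` matrix. -/
def onesMat (N : ℕ) : Matrix (Fin N) (Fin N) ℝ := fun _ _ => 1

/-- Quadratic form `‖A‖_M² := ⟨A, M A⟩_F` for a symmetric `M` (possibly negative). -/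
def quadForm (M : Matrix (Fin N) (Fin N) ℝ) (A : Matrix (Fin N) (Fin p) ℝ) : ℝ :=
  frobInner A (M * A)

/-- Augmented Lagrangian `L_η(X, X0; Y, Z)`, where `S` plays the role of `√(I−W)`. -/
def Lag (F : Matrix (Fin N) (Fin p) ℝ → ℝ) (S : Matrix (Fin N) (Fin N) ℝ) (η : ℝ)
    (X X0 Y Z : Matrix (Fin N) (Fin p) ℝ) : ℝ :=
  F X + frobInner Y (X - X0) + (2*η)⁻¹ * frobSq (X - X0)
    + frobInner Z (S * X0) + (2*η)⁻¹ * frobSq (S * X0)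

/-!
The `X`-step changes the augmented Lagrangian by `F X' - F X + ⟨Y, X' - X⟩` plus a difference of
squares, which regroups as `(F X' - F X - ⟨∇F X', X' - X⟩) + ⟨R, X' - X⟩ - ‖X' - X‖² / (2η)`, where
`R` is the residual of the inexact `X`-step. The descent lemma for an `L`-Lipschitz gradient bounds
the first term by `L/2 ‖X' - X‖²`, and Young's inequality bounds `⟨R, X' - X⟩` by
`‖R‖² / (2L) + L/2 ‖X' - X‖²`, where `‖R‖² ≤ ε`.
-/

theorem image_sub_sub_fderiv_le_of_lipschitz {E : Type*} [NormedAddCommGroup E] [NormedSpace ℝ E]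
    {f : E → ℝ} {f' : E → E →L[ℝ] ℝ} {L : ℝ} (hf : ∀ x, HasFDerivAt f (f' x) x)
    (hL : ∀ x y, ‖f' x - f' y‖ ≤ L * ‖x - y‖) (u v : E) :
    f v - f u - f' v (v - u) ≤ L / 2 * ‖v - u‖ ^ 2 := by
  set d := v - u
  -- The claim is `φ 1 ≤ φ 0`, and the Lipschitz bound makes `φ` antitone on `[0, 1]`.
  let φ : ℝ → ℝ := fun t => f (u + t • d) - t * f' v d + L / 2 * (1 - t) ^ 2 * ‖d‖ ^ 2
  have hφ : ∀ t, HasDerivAt φ (f' (u + t • d) d - f' v d - L * (1 - t) * ‖d‖ ^ 2) t := by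
    intro t
    have hline : HasDerivAt (fun s : ℝ => u + s • d) d t := by
      simpa using ((hasDerivAt_id t).smul_const d).const_add u
    have hlin : HasDerivAt (fun s : ℝ => s * f' v d) (f' v d) t := by
      simpa using (hasDerivAt_id t).mul_const (f' v d)
    have hsub : HasDerivAt (fun s : ℝ => 1 - s) (-1) t := by
      simpa using (hasDerivAt_id t).const_sub 1
    have hquad := ((hsub.pow 2).const_mul (L / 2)).mul_const (‖d‖ ^ 2)
    exact ((((hf _).comp_hasDerivAt t hline).sub hlin).add hquad).congr_deriv (by ring)
  have hanti : AntitoneOn φ (Set.Icc 0 1) := by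
    refine antitoneOn_of_deriv_nonpos (convex_Icc 0 1)
      (fun t _ => (hφ t).continuousAt.continuousWithinAt)
      (fun t _ => (hφ t).differentiableAt.differentiableWithinAt) fun t ht => ?_
    rw [interior_Icc] at ht
    have hdist : ‖u + t • d - v‖ = (1 - t) * ‖d‖ := by
      rw [show u + t • d - v = (t - 1) • d by simp only [d]; module, norm_smul,
        Real.norm_of_nonpos (by linarith [ht.2]), neg_sub]
    have hbound : f' (u + t • d) d - f' v d ≤ L * (1 - t) * ‖d‖ ^ 2 :=
      calc f' (u + t • d) d - f' v d = (f' (u + t • d) - f' v) d := rfl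
        _ ≤ ‖f' (u + t • d) - f' v‖ * ‖d‖ := (le_abs_self _).trans
            ((f' (u + t • d) - f' v).le_opNorm d)
        _ ≤ L * ‖u + t • d - v‖ * ‖d‖ := by gcongr; exact hL _ _
        _ = L * (1 - t) * ‖d‖ ^ 2 := by rw [hdist]; ring
    rw [(hφ t).deriv]
    linarith
  have h01 := hanti (Set.left_mem_Icc.mpr zero_le_one) (Set.right_mem_Icc.mpr zero_le_one)
    zero_le_one
  have hφ0 : φ 0 = f u + L / 2 * ‖d‖ ^ 2 := by simp [φ]
  have hφ1 : φ 1 = f v - f' v d := by simp [φ, d]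
  linarith

lemma frobInner_comm (A B : Matrix (Fin N) (Fin p) ℝ) : frobInner A B = frobInner B A := by
  simp [frobInner, mul_comm]

lemma frobInner_add_left (A B C : Matrix (Fin N) (Fin p) ℝ) :
    frobInner (A + B) C = frobInner A C + frobInner B C := by
  simp [frobInner, add_mul, Finset.sum_add_distrib]

lemma frobInner_add_right (A B C : Matrix (Fin N) (Fin p) ℝ) :
    frobInner A (B + C) = frobInner A B + frobInner A C := by
  rw [frobInner_comm, frobInner_add_left, frobInner_comm B, frobInner_comm C]

lemma frobInner_sub_left (A B C : Matrix (Fin N) (Fin p) ℝ) :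
    frobInner (A - B) C = frobInner A C - frobInner B C := by
  simp [frobInner, sub_mul, Finset.sum_sub_distrib]

lemma frobInner_smul_left (c : ℝ) (A B : Matrix (Fin N) (Fin p) ℝ) :
    frobInner (c • A) B = c * frobInner A B := by
  simp [frobInner, Finset.mul_sum, mul_assoc]

-- `‖·‖` on matrices is the Frobenius norm, realised as the `L²` norm of the `L²` norms of the rows.
lemma frobInner_eq_inner (A B : Matrix (Fin N) (Fin p) ℝ) :
    frobInner A B = inner ℝ (WithLp.toLp 2 fun i => WithLp.toLp 2 (A i))
      (WithLp.toLp 2 fun i => WithLp.toLp 2 (B i)) := by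
  simp [frobInner, PiLp.inner_apply, mul_comm]

lemma frobSq_eq_norm_sq (A : Matrix (Fin N) (Fin p) ℝ) : frobSq A = ‖A‖ ^ 2 :=
  (frobInner_eq_inner A A).trans (real_inner_self_eq_norm_sq _)

lemma frobNorm_eq_norm (A : Matrix (Fin N) (Fin p) ℝ) : frobNorm A = ‖A‖ := by
  rw [frobNorm, ← frobSq, frobSq_eq_norm_sq, Real.sqrt_sq (norm_nonneg A)]

lemma abs_frobInner_le (A B : Matrix (Fin N) (Fin p) ℝ) : |frobInner A B| ≤ ‖A‖ * ‖B‖ :=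
  frobInner_eq_inner A B ▸ abs_real_inner_le_norm _ _

lemma frobInner_le_young {c : ℝ} (hc : 0 < c) (A B : Matrix (Fin N) (Fin p) ℝ) :
    frobInner A B ≤ (2 * c)⁻¹ * frobSq A + c / 2 * frobSq B := by
  rw [frobSq_eq_norm_sq, frobSq_eq_norm_sq]
  have hAM : ‖A‖ * ‖B‖ ≤ (2 * c)⁻¹ * ‖A‖ ^ 2 + c / 2 * ‖B‖ ^ 2 := by
    field_simp
    nlinarith [sq_nonneg (‖A‖ - c * ‖B‖)]
  exact (le_abs_self _).trans ((abs_frobInner_le A B).trans hAM)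

lemma Lag_sub_Lag_eq (F : Matrix (Fin N) (Fin p) ℝ → ℝ) (S : Matrix (Fin N) (Fin N) ℝ) {η : ℝ}
    (hη : η ≠ 0) (g X X' X0 Y Z : Matrix (Fin N) (Fin p) ℝ) :
    Lag F S η X' X0 Y Z - Lag F S η X X0 Y Z
      = (F X' - F X - frobInner g (X' - X)) + frobInner (g + Y + η⁻¹ • (X' - X0)) (X' - X)
        - (2 * η)⁻¹ * frobSq (X' - X) := by
  have hsplit : X' - X0 = (X - X0) + (X' - X) := by abel
  simp only [Lag, frobSq]
  rw [hsplit]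
  simp only [frobInner_add_left, frobInner_add_right, frobInner_smul_left, frobInner_comm (X' - X)]
  field_simp
  ring

lemma image_sub_sub_frobInner_le_of_lipschitz {L : ℝ} (hL : 0 ≤ L)
    {F : Matrix (Fin N) (Fin p) ℝ → ℝ} {G : Matrix (Fin N) (Fin p) ℝ → Matrix (Fin N) (Fin p) ℝ}
    (hgrad : ∀ U, HasFDerivAt F (frobCLM (G U)) U)
    (hLip : ∀ U V, frobNorm (G U - G V) ≤ L * frobNorm (U - V)) (U V : Matrix (Fin N) (Fin p) ℝ) :
    F V - F U - frobInner (G V) (V - U) ≤ L / 2 * frobSq (V - U) := by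
  rw [frobSq_eq_norm_sq]
  refine image_sub_sub_fderiv_le_of_lipschitz hgrad (fun U V =>
    ContinuousLinearMap.opNorm_le_bound _ (by positivity) fun H => ?_) U V
  -- `frobCLM` is typed with the product topology on matrices, so `rw` does not see through it.
  change ‖frobInner (G U) H - frobInner (G V) H‖ ≤ _
  rw [← frobInner_sub_left, Real.norm_eq_abs]
  calc |frobInner (G U - G V) H| ≤ ‖G U - G V‖ * ‖H‖ := abs_frobInner_le _ _
    _ ≤ L * ‖U - V‖ * ‖H‖ := by
      gcongr
      simpa only [frobNorm_eq_norm] using hLip U V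

theorem adapd_x_decrease_general (N p : ℕ)
    -- `S` is the unique positive semidefinite square root of `I − W`
    (S : Matrix (Fin N) (Fin N) ℝ)
    -- objective: `F` is `L`-smooth (gradient `G` w.r.t. the Frobenius inner product)
    -- and bounded below by `flb`
    (L : ℝ) (hL : 0 < L)
    (F : Matrix (Fin N) (Fin p) ℝ → ℝ)
    (G : Matrix (Fin N) (Fin p) ℝ → Matrix (Fin N) (Fin p) ℝ)
    (hgrad : ∀ U, HasFDerivAt F (frobCLM (G U)) U)
    (hLip : ∀ U V, frobNorm (G U - G V) ≤ L * frobNorm (U - V))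
    -- ADAPD iterates with parameter `η` and error tolerances `ε`
    (η : ℝ) (hη : 0 < η)
    (ε : ℕ → ℝ)
    (X X0 Y Z : ℕ → Matrix (Fin N) (Fin p) ℝ)
    (hres : ∀ k, frobSq (G (X (k+1)) + Y k + η⁻¹ • (X (k+1) - X0 k)) ≤ ε (k+1)) :
    ∀ k : ℕ,
      Lag F S η (X (k+1)) (X0 k) (Y k) (Z k) - Lag F S η (X k) (X0 k) (Y k) (Z k)
        ≤ (2*L*η - 1)/(2*η) * frobSq (X (k+1) - X k) + ε (k+1)/(2*L) := by
  intro k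
  have hdescent := image_sub_sub_frobInner_le_of_lipschitz hL.le hgrad hLip (X k) (X (k+1))
  have hyoung := frobInner_le_young hL (G (X (k+1)) + Y k + η⁻¹ • (X (k+1) - X0 k))
    (X (k+1) - X k)
  have hresidual : (2 * L)⁻¹ * frobSq (G (X (k+1)) + Y k + η⁻¹ • (X (k+1) - X0 k))
      ≤ ε (k+1) / (2 * L) := by
    rw [inv_mul_eq_div]; gcongr; exact hres k
  have hcoef : (2*L*η - 1)/(2*η) = L - (2 * η)⁻¹ := by field_simp
  rw [Lag_sub_Lag_eq F S hη.ne' (G (X (k+1))), hcoef]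
  linarith

/-- Lemma: descent in the `X`-update of ADAPD. -/
theorem adapd_x_decrease (N p : ℕ) (hN : 0 < N) (hp : 0 < p)
    -- mixing matrix assumptions
    (W : Matrix (Fin N) (Fin N) ℝ) (hWsym : Wᵀ = W)
    (hWub : Matrix.PosSemidef (1 - W)) (hWlb : Matrix.PosDef (1 + W))
    (hWnull : ∀ v : Fin N → ℝ, (1 - W).mulVec v = 0 ↔ ∃ c : ℝ, v = fun _ => c)
    (ρ : ℝ) (hρdef : ρ = specNorm (W - (N:ℝ)⁻¹ • onesMat N)) (hρlt : ρ < 1)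
    -- `S` is the unique positive semidefinite square root of `I − W`
    (S : Matrix (Fin N) (Fin N) ℝ) (hSpsd : S.PosSemidef) (hSsq : S * S = 1 - W)
    -- objective: `F` is `L`-smooth (gradient `G` w.r.t. the Frobenius inner product)
    -- and bounded below by `flb`
    (L flb : ℝ) (hL : 0 < L)
    (F : Matrix (Fin N) (Fin p) ℝ → ℝ)
    (G : Matrix (Fin N) (Fin p) ℝ → Matrix (Fin N) (Fin p) ℝ)
    (hgrad : ∀ U, HasFDerivAt F (frobCLM (G U)) U)
    (hLip : ∀ U V, frobNorm (G U - G V) ≤ L * frobNorm (U - V))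
    (hlb : ∀ U, flb ≤ F U)
    -- ADAPD iterates with parameter `η` and error tolerances `ε`
    (η : ℝ) (hη : 0 < η)
    (ε : ℕ → ℝ) (hεpos : ∀ k, 0 < ε (k+1)) (hεmono : ∀ k, ε (k+2) ≤ ε (k+1))
    (X X0 Y Z : ℕ → Matrix (Fin N) (Fin p) ℝ)
    (hZ0 : ∃ U0 : Matrix (Fin N) (Fin p) ℝ, Z 0 = S * U0)
    (hres : ∀ k, frobSq (G (X (k+1)) + Y k + η⁻¹ • (X (k+1) - X0 k)) ≤ ε (k+1))
    (hX0it : ∀ k, X0 (k+1) = (2:ℝ)⁻¹ • (W * X0 k + X (k+1) + η • (Y k - S * Z k)))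
    (hYit : ∀ k, Y (k+1) = Y k + η⁻¹ • (X (k+1) - X0 (k+1)))
    (hZit : ∀ k, Z (k+1) = Z k + η⁻¹ • (S * X0 (k+1)))
    (hη2 : η < 1/(2*L)) :
    ∀ k : ℕ,
      Lag F S η (X (k+1)) (X0 k) (Y k) (Z k) - Lag F S η (X k) (X0 k) (Y k) (Z k)
        ≤ (2*L*η - 1)/(2*η) * frobSq (X (k+1) - X k) + ε (k+1)/(2*L) :=
  adapd_x_decrease_general N p S L hL F G hgrad hLip η hη ε X X0 Y Z hres
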